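/- Let a ∈ ℝⁿ with a ≥ 0, let B be an entrywise nonnegative n×n×n tensor, define F(x) = a + Bx² − x and R_x = I − Bx: − B:x, and let x* ≥ 0 satisfy x* = a + B(x*)². Let x_k satisfy 0 ≤ x_k ≤ x* and F(x_k) ≥ 0 entrywise. Suppose R_{x_k} = M − N is a splitting with N ≥ 0 entrywise, M invertible with M⁻¹ ≥ 0 entrywise, and R_{x_k} invertible with R_{x_k}⁻¹ ≥ 0 entrywise. Define x_{k+1} by M x_{k+1} = N x_k + a − Bx_k². Then x_k ≤ x_{k+1} ≤ x* entrywise, and F(x_{k+1}) = Bh² + Nh ≥ 0 entrywise, where h = x_{k+1} − x_k. -/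

import Mathlib

open Matrix

/-- `(tapp B x y) i = Σ_{j,k} B i j k * x j * y k`, the tensor–vector–vector product. -/
def tapp {n : ℕ} (B : Fin n → Fin n → Fin n → ℝ) (x y : Fin n → ℝ) : Fin n → ℝ :=
  fun i => ∑ j, ∑ k, B i j k * x j * y k

/-- The matrix `Bx:`, satisfying `(Bx:) h = B x h`; `(Bx:)_{ij} = Σ_k b_{ikj} x_k`. -/
def matL {n : ℕ} (B : Fin n → Fin n → Fin n → ℝ) (x : Fin n → ℝ) :
    Matrix (Fin n) (Fin n) ℝ :=
  Matrix.of fun i j => ∑ k, B i k j * x k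

/-- The matrix `B:x`, satisfying `(B:x) h = B h x`; `(B:x)_{ij} = Σ_k b_{ijk} x_k`. -/
def matR {n : ℕ} (B : Fin n → Fin n → Fin n → ℝ) (x : Fin n → ℝ) :
    Matrix (Fin n) (Fin n) ℝ :=
  Matrix.of fun i j => ∑ k, B i j k * x k

/-- `R_x = I − Bx: − B:x`, the negative Jacobian of `x ↦ a + Bx² − x`. -/
def Rmat {n : ℕ} (B : Fin n → Fin n → Fin n → ℝ) (x : Fin n → ℝ) :
    Matrix (Fin n) (Fin n) ℝ :=
  1 - matL B x - matR B x

/- Since `F(y) = F(x) − R_x (y − x) + B(y − x)²` exactly, the update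
`M x_{k+1} = N x_k + a − Bx_k²` amounts to `M h = F(x_k) ≥ 0`, and with `d = x* − x_k` one gets
`M (d − h) = Bd² + Nd ≥ 0` from `F(x*) = 0`. Monotonicity of `M` (`M⁻¹ ≥ 0`) gives `0 ≤ h ≤ d`, and then
`F(x_{k+1}) = F(x_k) − R_{x_k} h + Bh² = (M − R_{x_k}) h + Bh² = Nh + Bh²`. -/

section

variable {n : ℕ} (B : Fin n → Fin n → Fin n → ℝ)

def quadResidual (a x : Fin n → ℝ) : Fin n → ℝ := a + tapp B x x - x

lemma matL_mulVec (x h : Fin n → ℝ) : matL B x *ᵥ h = tapp B x h := by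
  funext i
  simp only [matL, tapp, mulVec, dotProduct, of_apply, Finset.sum_mul]
  rw [Finset.sum_comm]

lemma matR_mulVec (x h : Fin n → ℝ) : matR B x *ᵥ h = tapp B h x := by
  funext i
  simp only [matR, tapp, mulVec, dotProduct, of_apply, Finset.sum_mul]
  exact Finset.sum_congr rfl fun j _ => Finset.sum_congr rfl fun k _ => by ring

lemma Rmat_mulVec (x h : Fin n → ℝ) : Rmat B x *ᵥ h = h - tapp B x h - tapp B h x := by
  simp only [Rmat, sub_mulVec, one_mulVec, matL_mulVec, matR_mulVec]

lemma tapp_self_eq_add_sub (x y : Fin n → ℝ) :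
    tapp B y y = tapp B x x + tapp B x (y - x) + tapp B (y - x) x + tapp B (y - x) (y - x) := by
  funext i
  simp only [tapp, Pi.add_apply, Pi.sub_apply, ← Finset.sum_add_distrib]
  exact Finset.sum_congr rfl fun j _ => Finset.sum_congr rfl fun k _ => by ring

lemma quadResidual_eq_sub_Rmat_mulVec_add_tapp (a x y : Fin n → ℝ) :
    quadResidual B a y = quadResidual B a x - Rmat B x *ᵥ (y - x) + tapp B (y - x) (y - x) := by
  rw [quadResidual, quadResidual, Rmat_mulVec, tapp_self_eq_add_sub B x y]
  abel

variable {B}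

lemma tapp_nonneg (hB : ∀ i j k, 0 ≤ B i j k) {x y : Fin n → ℝ} (hx : 0 ≤ x) (hy : 0 ≤ y) :
    0 ≤ tapp B x y := fun i =>
  Finset.sum_nonneg fun j _ => Finset.sum_nonneg fun k _ =>
    mul_nonneg (mul_nonneg (hB i j k) (hx j)) (hy k)

end

section

variable {ι R : Type*} [Fintype ι] [PartialOrder R]

lemma mulVec_nonneg {m : Type*} [Semiring R] [IsOrderedRing R] {A : Matrix m ι R}
    (hA : ∀ i j, 0 ≤ A i j) {v : ι → R} (hv : 0 ≤ v) : 0 ≤ A *ᵥ v :=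
  fun i => dotProduct_nonneg_of_nonneg (hA i) hv

lemma nonneg_of_mulVec_nonneg [DecidableEq ι] [CommRing R] [IsOrderedRing R] {A : Matrix ι ι R}
    (hA : IsUnit A.det) (hAinv : ∀ i j, 0 ≤ A⁻¹ i j) {v : ι → R} (hv : 0 ≤ A *ᵥ v) : 0 ≤ v := by
  simpa only [mulVec_mulVec, nonsing_inv_mul A hA, one_mulVec] using mulVec_nonneg hAinv hv

end

lemma mulVec_sub_eq_quadResidual_of_splitting {n : ℕ} {B : Fin n → Fin n → Fin n → ℝ}
    {a x x' : Fin n → ℝ} {M N : Matrix (Fin n) (Fin n) ℝ} (hsplit : Rmat B x = M - N)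
    (hupd : M *ᵥ x' = N *ᵥ x + a - tapp B x x) : M *ᵥ (x' - x) = quadResidual B a x := by
  rw [mulVec_sub, hupd, eq_add_of_sub_eq hsplit.symm, add_mulVec, Rmat_mulVec, quadResidual]
  abel

theorem splitting_monotone_step_general
    {n : ℕ} (a : Fin n → ℝ) (B : Fin n → Fin n → Fin n → ℝ)
    (hB : ∀ i j k, 0 ≤ B i j k)
    (xstar : Fin n → ℝ)
    (hxstar : xstar = a + tapp B xstar xstar)
    (xk : Fin n → ℝ) (hxkle : ∀ i, xk i ≤ xstar i)
    (hF : ∀ i, 0 ≤ (a + tapp B xk xk - xk) i)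
    (M N : Matrix (Fin n) (Fin n) ℝ)
    (hsplit : Rmat B xk = M - N)
    (hN : ∀ i j, 0 ≤ N i j)
    (hMdet : IsUnit M.det) (hMinv : ∀ i j, 0 ≤ M⁻¹ i j)
    (xk1 : Fin n → ℝ)
    (hupd : M *ᵥ xk1 = N *ᵥ xk + a - tapp B xk xk) :
    (∀ i, xk i ≤ xk1 i) ∧ (∀ i, xk1 i ≤ xstar i) ∧
    (a + tapp B xk1 xk1 - xk1 = tapp B (xk1 - xk) (xk1 - xk) + N *ᵥ (xk1 - xk)) ∧
    (∀ i, 0 ≤ (a + tapp B xk1 xk1 - xk1) i) := by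
  have hM : M = Rmat B xk + N := eq_add_of_sub_eq hsplit.symm
  have hMh := mulVec_sub_eq_quadResidual_of_splitting hsplit hupd
  have hh : 0 ≤ xk1 - xk := nonneg_of_mulVec_nonneg hMdet hMinv (hMh ▸ hF)
  have hd : 0 ≤ xstar - xk := fun i => sub_nonneg.mpr (hxkle i)
  have hFstar : 0 = quadResidual B a xk - Rmat B xk *ᵥ (xstar - xk) +
      tapp B (xstar - xk) (xstar - xk) := by
    rw [← quadResidual_eq_sub_Rmat_mulVec_add_tapp, quadResidual, ← hxstar, sub_self]
  have hMdh : M *ᵥ (xstar - xk - (xk1 - xk)) =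
      tapp B (xstar - xk) (xstar - xk) + N *ᵥ (xstar - xk) := by
    rw [mulVec_sub, hMh, hM, add_mulVec]
    linear_combination hFstar
  have hdh := nonneg_of_mulVec_nonneg hMdet hMinv
    (hMdh ▸ add_nonneg (tapp_nonneg hB hd hd) (mulVec_nonneg hN hd))
  have hres : quadResidual B a xk1 = tapp B (xk1 - xk) (xk1 - xk) + N *ᵥ (xk1 - xk) := by
    rw [quadResidual_eq_sub_Rmat_mulVec_add_tapp B a xk xk1, ← hMh, hM, add_mulVec]
    abel
  refine ⟨fun i => sub_nonneg.mp (hh i), fun i => by simpa using hdh i, hres, ?_⟩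
  rw [← quadResidual, hres]
  exact add_nonneg (tapp_nonneg hB hh hh) (mulVec_nonneg hN hh)

/-- Monotone step of a splitting-based (block Jacobi type) iteration
(Theorem `thmj` in the paper): the iterate increases, stays below the solution
`x*`, and the new residual `F(x_{k+1}) = Bh² + Nh` is nonnegative. -/
theorem splitting_monotone_step
    {n : ℕ} (a : Fin n → ℝ) (B : Fin n → Fin n → Fin n → ℝ)
    (ha : ∀ i, 0 ≤ a i) (hB : ∀ i j k, 0 ≤ B i j k)
    (xstar : Fin n → ℝ) (hxstar0 : ∀ i, 0 ≤ xstar i)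
    (hxstar : xstar = a + tapp B xstar xstar)
    (xk : Fin n → ℝ) (hxk0 : ∀ i, 0 ≤ xk i) (hxkle : ∀ i, xk i ≤ xstar i)
    (hF : ∀ i, 0 ≤ (a + tapp B xk xk - xk) i)
    (M N : Matrix (Fin n) (Fin n) ℝ)
    (hsplit : Rmat B xk = M - N)
    (hN : ∀ i j, 0 ≤ N i j)
    (hMdet : IsUnit M.det) (hMinv : ∀ i j, 0 ≤ M⁻¹ i j)
    (hRdet : IsUnit (Rmat B xk).det) (hRinv : ∀ i j, 0 ≤ (Rmat B xk)⁻¹ i j)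
    (xk1 : Fin n → ℝ)
    (hupd : M *ᵥ xk1 = N *ᵥ xk + a - tapp B xk xk) :
    (∀ i, xk i ≤ xk1 i) ∧ (∀ i, xk1 i ≤ xstar i) ∧
    (a + tapp B xk1 xk1 - xk1 = tapp B (xk1 - xk) (xk1 - xk) + N *ᵥ (xk1 - xk)) ∧
    (∀ i, 0 ≤ (a + tapp B xk1 xk1 - xk1) i) :=
  splitting_monotone_step_general a B hB xstar hxstar xk hxkle hF M N hsplit hN hMdet hMinv xk1 hupd
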